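/- arXiv:2603.07738 — 2 statements merged into one kernel-verified Lean document; each statement's English description precedes it below -/
import Mathlib

section
/- The LDCU density reconstruction creates no new local extrema: let a⁻ < 0 < a⁺ and v be real numbers with a⁻ < v < a⁺, let ρ⁻, ρ_int, ρ⁺ be real numbers, define S⁻ = (v − a⁻)(ρ_int − ρ⁻), S⁺ = (a⁺ − v)(ρ⁺ − ρ_int), δ = minmod(S⁻, S⁺), ρ_L = ρ_int + δ/(a⁻ − v) and ρ_R = ρ_int + δ/(a⁺ − v). Then min(ρ⁻, ρ_int) ≤ ρ_L ≤ max(ρ⁻, ρ_int) and min(ρ_int, ρ⁺) ≤ ρ_R ≤ max(ρ_int, ρ⁺). -/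
/-! Both `S⁻ / (a⁻ - v) = ρ⁻ - ρ_int` and `S⁺ / (a⁺ - v) = ρ⁺ - ρ_int`, so `ρ_L` and `ρ_R` are
`ρ_int` shifted by `δ / (a⁻ - v)` and `δ / (a⁺ - v)`. Since `minmod S⁻ S⁺` lies between `0` and
each of its arguments, and `x ↦ ρ_int + x / c` maps intervals to intervals, `ρ_L` lies between
`ρ_int` and `ρ⁻`, and `ρ_R` between `ρ_int` and `ρ⁺`. -/

open Set Interval

/-- The minmod function: `min` if both arguments are positive, `max` if both are
negative, and `0` otherwise. -/
noncomputable def minmod (a b : ℝ) : ℝ :=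
  if 0 < a ∧ 0 < b then min a b else if a < 0 ∧ b < 0 then max a b else 0

theorem minmod_comm (a b : ℝ) : minmod a b = minmod b a := by
  simp only [minmod, and_comm, min_comm, max_comm]

theorem minmod_mem_uIcc_zero_left (a b : ℝ) : minmod a b ∈ [[0, a]] := by
  unfold minmod
  split_ifs with hpos hneg
  · exact mem_uIcc_of_le (lt_min hpos.1 hpos.2).le (min_le_left a b)
  · exact mem_uIcc_of_ge (le_max_left a b) (max_lt hneg.1 hneg.2).le
  · exact left_mem_uIcc

theorem minmod_mem_uIcc_zero_right (a b : ℝ) : minmod a b ∈ [[0, b]] :=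
  minmod_comm a b ▸ minmod_mem_uIcc_zero_left b a

theorem add_div_mem_uIcc {d s : ℝ} (x c : ℝ) (h : d ∈ [[0, s]]) :
    x + d / c ∈ [[x, x + s / c]] := by
  have hdiv : d / c ∈ [[0 / c, s / c]] := image_div_const_uIcc c 0 s ▸ mem_image_of_mem _ h
  rw [zero_div] at hdiv
  have hshift := image_const_add_uIcc x 0 (s / c) ▸ mem_image_of_mem (x + ·) hdiv
  rwa [add_zero] at hshift

theorem ldcu_density_reconstruction_no_new_extrema_general
    (am ap v ρm ρint ρp : ℝ)
    (hamv : am < v) (hvap : v < ap)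
    (Sm Sp δ ρL ρR : ℝ)
    (hSm : Sm = (v - am) * (ρint - ρm))
    (hSp : Sp = (ap - v) * (ρp - ρint))
    (hδ : δ = minmod Sm Sp)
    (hρL : ρL = ρint + δ / (am - v))
    (hρR : ρR = ρint + δ / (ap - v)) :
    (min ρm ρint ≤ ρL ∧ ρL ≤ max ρm ρint) ∧
      (min ρint ρp ≤ ρR ∧ ρR ≤ max ρint ρp) := by
  have hρm : ρint + Sm / (am - v) = ρm := by
    rw [hSm, ← neg_sub v am, div_neg, mul_div_cancel_left₀ _ (sub_ne_zero.mpr hamv.ne'),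
      neg_sub, add_sub_cancel]
  have hρp : ρint + Sp / (ap - v) = ρp := by
    rw [hSp, mul_div_cancel_left₀ _ (sub_ne_zero.mpr hvap.ne'), add_sub_cancel]
  have hL := add_div_mem_uIcc ρint (am - v) (minmod_mem_uIcc_zero_left Sm Sp)
  have hR := add_div_mem_uIcc ρint (ap - v) (minmod_mem_uIcc_zero_right Sm Sp)
  rw [← hδ, ← hρL, hρm, uIcc_comm] at hL
  rw [← hδ, ← hρR, hρp] at hR
  exact ⟨hL, hR⟩

/-- The LDCU density reconstruction creates no new local extrema. -/
theorem ldcu_density_reconstruction_no_new_extrema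
    (am ap v ρm ρint ρp : ℝ)
    (ham : am < 0) (hap : 0 < ap) (hamv : am < v) (hvap : v < ap)
    (Sm Sp δ ρL ρR : ℝ)
    (hSm : Sm = (v - am) * (ρint - ρm))
    (hSp : Sp = (ap - v) * (ρp - ρint))
    (hδ : δ = minmod Sm Sp)
    (hρL : ρL = ρint + δ / (am - v))
    (hρR : ρR = ρint + δ / (ap - v)) :
    (min ρm ρint ≤ ρL ∧ ρL ≤ max ρm ρint) ∧
      (min ρint ρp ≤ ρR ∧ ρR ≤ max ρint ρp) :=
  ldcu_density_reconstruction_no_new_extrema_general am ap v ρm ρint ρp hamv hvap Sm Sp δ ρL ρR hSm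
    hSp hδ hρL hρR
end

section
/- Semi-discrete preservation of the discrete divergence by constrained transport: let Δx > 0 and Δy > 0, let Ω : ℤ × ℤ → (ℝ → ℝ) be arbitrary corner electric fields, and let B₁ : ℤ × ℤ → (ℝ → ℝ) (face values at (j+½, k)) and B₂ : ℤ × ℤ → (ℝ → ℝ) (face values at (j, k+½)) be differentiable functions of time satisfying, for all j, k and t, d/dt B₁_{j+½,k}(t) = −(Ω_{j+½,k+½}(t) − Ω_{j+½,k−½}(t))/Δy and d/dt B₂_{j,k+½}(t) = (Ω_{j+½,k+½}(t) − Ω_{j−½,k+½}(t))/Δx. Then for every cell (j,k), the discrete divergence (∇·B)_{j,k}(t) = (B₁_{j+½,k}(t) − B₁_{j−½,k}(t))/Δx + (B₂_{j,k+½}(t) − B₂_{j,k−½}(t))/Δy is constant in time. -/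
/-!
The constrained-transport update is a discrete curl of the corner field `Ω`, and the discrete
divergence of a discrete curl vanishes identically: each corner value enters the divergence of a
cell twice, with opposite signs. Hence the time derivative of the cell divergence is zero, and the
divergence is constant by the mean value theorem.
-/

section DiscreteVectorCalculus

variable {K : Type*} [Field K]

/-- Cell-centred divergence of face values: `F1 (j, k)` lives at `(j+½, k)`, `F2 (j, k)` at
`(j, k+½)`. -/
def discreteDiv (Δx Δy : K) (F1 F2 : ℤ × ℤ → K) (p : ℤ × ℤ) : K :=
  (F1 p - F1 (p.1 - 1, p.2)) / Δx + (F2 p - F2 (p.1, p.2 - 1)) / Δy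

/-- First component of `-∇ × Ω` on the `x`-faces, for a corner field `Ω (j, k)` at
`(j+½, k+½)`. -/
def discreteCurl₁ (Δy : K) (Ω : ℤ × ℤ → K) (p : ℤ × ℤ) : K :=
  -(Ω p - Ω (p.1, p.2 - 1)) / Δy

def discreteCurl₂ (Δx : K) (Ω : ℤ × ℤ → K) (p : ℤ × ℤ) : K :=
  (Ω p - Ω (p.1 - 1, p.2)) / Δx

theorem discreteDiv_discreteCurl (Δx Δy : K) (Ω : ℤ × ℤ → K) (p : ℤ × ℤ) :
    discreteDiv Δx Δy (discreteCurl₁ Δy Ω) (discreteCurl₂ Δx Ω) p = 0 := by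
  simp only [discreteDiv, discreteCurl₁, discreteCurl₂]
  ring

end DiscreteVectorCalculus

theorem hasDerivAt_discreteDiv {𝕜 : Type*} [NontriviallyNormedField 𝕜] (Δx Δy : 𝕜)
    {B1 B2 : ℤ × ℤ → 𝕜 → 𝕜} {F1 F2 : ℤ × ℤ → 𝕜} {t : 𝕜}
    (hB1 : ∀ p, HasDerivAt (B1 p) (F1 p) t) (hB2 : ∀ p, HasDerivAt (B2 p) (F2 p) t)
    (p : ℤ × ℤ) :
    HasDerivAt (fun s => discreteDiv Δx Δy (B1 · s) (B2 · s) p)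
      (discreteDiv Δx Δy F1 F2 p) t :=
  (((hB1 p).sub (hB1 _)).div_const Δx).add (((hB2 p).sub (hB2 _)).div_const Δy)

theorem constrained_transport_semidiscrete_divergence_constant_general
    (Δx Δy : ℝ)
    (Ω B1 B2 : ℤ × ℤ → ℝ → ℝ)
    (hB1 : ∀ (j k : ℤ) (t : ℝ), HasDerivAt (B1 (j, k))
      (-(Ω (j, k) t - Ω (j, k - 1) t) / Δy) t)
    (hB2 : ∀ (j k : ℤ) (t : ℝ), HasDerivAt (B2 (j, k))
      ((Ω (j, k) t - Ω (j - 1, k) t) / Δx) t)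
    (divB : ℤ × ℤ → ℝ → ℝ)
    (hdiv : ∀ (j k : ℤ) (t : ℝ), divB (j, k) t =
      (B1 (j, k) t - B1 (j - 1, k) t) / Δx
        + (B2 (j, k) t - B2 (j, k - 1) t) / Δy) :
    ∀ (j k : ℤ) (t₁ t₂ : ℝ), divB (j, k) t₁ = divB (j, k) t₂ := by
  intro j k t₁ t₂
  have hdivB : divB (j, k) = fun t => discreteDiv Δx Δy (B1 · t) (B2 · t) (j, k) :=
    funext (hdiv j k)
  have hderiv : ∀ t, HasDerivAt (divB (j, k)) 0 t := fun t => by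
    rw [hdivB, ← discreteDiv_discreteCurl Δx Δy (Ω · t) (j, k)]
    exact hasDerivAt_discreteDiv Δx Δy (fun ⟨j, k⟩ => hB1 j k t) (fun ⟨j, k⟩ => hB2 j k t) _
  exact is_const_of_deriv_eq_zero (fun t => (hderiv t).differentiableAt)
    (fun t => (hderiv t).deriv) t₁ t₂

/-- Semi-discrete preservation of the discrete divergence by constrained
transport.  The face value `B1 (j, k)` stands for `B₁` at `(j+½, k)`,
`B2 (j, k)` stands for `B₂` at `(j, k+½)`, and `Ω (j, k)` stands for the
corner electric field at `(j+½, k+½)`. -/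
theorem constrained_transport_semidiscrete_divergence_constant
    (Δx Δy : ℝ) (hΔx : 0 < Δx) (hΔy : 0 < Δy)
    (Ω B1 B2 : ℤ × ℤ → ℝ → ℝ)
    (hB1 : ∀ (j k : ℤ) (t : ℝ), HasDerivAt (B1 (j, k))
      (-(Ω (j, k) t - Ω (j, k - 1) t) / Δy) t)
    (hB2 : ∀ (j k : ℤ) (t : ℝ), HasDerivAt (B2 (j, k))
      ((Ω (j, k) t - Ω (j - 1, k) t) / Δx) t)
    (divB : ℤ × ℤ → ℝ → ℝ)
    (hdiv : ∀ (j k : ℤ) (t : ℝ), divB (j, k) t =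
      (B1 (j, k) t - B1 (j - 1, k) t) / Δx
        + (B2 (j, k) t - B2 (j, k - 1) t) / Δy) :
    ∀ (j k : ℤ) (t₁ t₂ : ℝ), divB (j, k) t₁ = divB (j, k) t₂ :=
  constrained_transport_semidiscrete_divergence_constant_general Δx Δy Ω B1 B2 hB1 hB2 divB hdiv
end
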